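/- With K₁, K₂ and K₃ as in Theorems 4.1, 4.2 and 4.3 (the case cos θα − cos θβ cos θγ ≥ 0, with δx, δy, δz > 0 and common parameters n₁, n₂, n₃, t₁, t₂, t₃, m₁, m₂, m₃, ρ₁, ρ₂, ρ₃, ρ₄, ψ₁), define C₁ := I_{n₃} ⊗ I_{n₂} ⊗ K₁, C₂ := I_{n₃} ⊗ K₂ and C₃ := K₃, all in ℂ^{n×n} with n = n₁n₂n₃. Assume the compatibility relation ρ₂ = ρ₁ − ρ₁ρ₄ + ψ₁ if m₁ ≤ m₂, and ρ₂ = ρ₁ − 1 + ρ₂ρ₄ + ψ₁ if m₁ > m₂. Then C₁, C₂, C₃ pairwise commute: C₁C₂ = C₂C₁, C₁C₃ = C₃C₁, and C₂C₃ = C₃C₂. (Section 4.2: the discrete partial derivative matrices commute with each other.) -/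

import Mathlib

open Real Matrix

/-- The Yee discretization `K₁` of `∂x` with quasi-periodic boundary condition. -/
noncomputable def K1 (n₁ : ℕ) (δx t₁ : ℝ) : Matrix (Fin n₁) (Fin n₁) ℂ :=
  Matrix.of fun s s' =>
    (1 / (δx : ℂ)) *
      ((if (s' : ℕ) = (s : ℕ) + 1 then 1 else 0)
        + (if (s : ℕ) = n₁ - 1 ∧ (s' : ℕ) = 0
            then Complex.exp (2 * (π : ℂ) * Complex.I * (t₁ : ℂ)) else 0)
        - (if s = s' then 1 else 0))

/-- The `n₁×n₁` block `S(a) = [[0, e^{−2πι t₁} I_a], [I_{n₁−a}, 0]]`. -/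
noncomputable def Sblk (n₁ : ℕ) (t₁ : ℝ) (a : ℕ) : Matrix (Fin n₁) (Fin n₁) ℂ :=
  Matrix.of fun s s' =>
    (if (s : ℕ) < a ∧ (s' : ℕ) = (s : ℕ) + (n₁ - a)
      then Complex.exp (-(2 * (π : ℂ) * Complex.I * (t₁ : ℂ))) else 0)
    + (if a ≤ (s : ℕ) ∧ (s' : ℕ) + a = (s : ℕ) then 1 else 0)

/-- `J₂ = e^{2πι ρ₁ t₁} S(m₁)`. -/
noncomputable def J2 (n₁ : ℕ) (t₁ : ℝ) (ρ₁ m₁ : ℕ) : Matrix (Fin n₁) (Fin n₁) ℂ :=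
  Complex.exp (2 * (π : ℂ) * Complex.I * (ρ₁ : ℂ) * (t₁ : ℂ)) • Sblk n₁ t₁ m₁

/-- The Yee discretization `K₂` of `∂y` with quasi-periodic boundary conditions. -/
noncomputable def K2 (n₁ n₂ : ℕ) (δy t₁ t₂ : ℝ) (ρ₁ m₁ : ℕ) :
    Matrix (Fin n₂ × Fin n₁) (Fin n₂ × Fin n₁) ℂ :=
  Matrix.of fun p q =>
    (1 / (δy : ℂ)) *
      ((if (q.1 : ℕ) = (p.1 : ℕ) + 1 ∧ q.2 = p.2 then 1 else 0)
        + (if (p.1 : ℕ) = n₂ - 1 ∧ (q.1 : ℕ) = 0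
            then Complex.exp (2 * (π : ℂ) * Complex.I * (t₂ : ℂ)) * J2 n₁ t₁ ρ₁ m₁ p.2 q.2
            else 0)
        - (if p = q then 1 else 0))

/-- `J₁ = e^{2πι ρ₂ t₁} S(m₂)`. -/
noncomputable def J1 (n₁ : ℕ) (t₁ : ℝ) (ρ₂ m₂ : ℕ) : Matrix (Fin n₁) (Fin n₁) ℂ :=
  Complex.exp (2 * (π : ℂ) * Complex.I * (ρ₂ : ℂ) * (t₁ : ℂ)) • Sblk n₁ t₁ m₂

/-- `J₃` in the case `cos θα − cos θβ cos θγ ≥ 0`. -/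
noncomputable def J3acute (n₁ n₂ : ℕ) (t₁ t₂ : ℝ) (ρ₁ ρ₂ ρ₃ ρ₄ ψ₁ m₁ m₂ m₃ : ℕ) :
    Matrix (Fin n₂ × Fin n₁) (Fin n₂ × Fin n₁) ℂ :=
  Matrix.of fun p q =>
    Complex.exp (2 * (π : ℂ) * Complex.I * (ρ₃ : ℂ) * (t₂ : ℂ)) *
      ((if (p.1 : ℕ) < m₃ ∧ (q.1 : ℕ) = (p.1 : ℕ) + (n₂ - m₃) then
          (if m₁ ≤ m₂ then
            Complex.exp (-(2 * (π : ℂ) * Complex.I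
                * ((t₂ : ℂ) + (ρ₁ : ℂ) * (ρ₄ : ℂ) * (t₁ : ℂ) - (ψ₁ : ℂ) * (t₁ : ℂ))))
              * Sblk n₁ t₁ (m₂ - m₁) p.2 q.2
          else
            Complex.exp (-(2 * (π : ℂ) * Complex.I
                * ((t₂ : ℂ) - (ρ₂ : ℂ) * (ρ₄ : ℂ) * (t₁ : ℂ) - (ψ₁ : ℂ) * (t₁ : ℂ))))
              * Sblk n₁ t₁ (n₁ - m₁ + m₂) p.2 q.2)
        else 0)
      + (if m₃ ≤ (p.1 : ℕ) ∧ (q.1 : ℕ) + m₃ = (p.1 : ℕ)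
          then J1 n₁ t₁ ρ₂ m₂ p.2 q.2 else 0))

/-- The Yee discretization `K₃` of `∂z`. -/
noncomputable def K3 (n₁ n₂ n₃ : ℕ) (δz t₃ : ℝ)
    (J : Matrix (Fin n₂ × Fin n₁) (Fin n₂ × Fin n₁) ℂ) :
    Matrix (Fin n₃ × Fin n₂ × Fin n₁) (Fin n₃ × Fin n₂ × Fin n₁) ℂ :=
  Matrix.of fun p q =>
    (1 / (δz : ℂ)) *
      ((if (q.1 : ℕ) = (p.1 : ℕ) + 1 ∧ q.2 = p.2 then 1 else 0)
        + (if (p.1 : ℕ) = n₃ - 1 ∧ (q.1 : ℕ) = 0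
            then Complex.exp (2 * (π : ℂ) * Complex.I * (t₃ : ℂ)) * J p.2 q.2 else 0)
        - (if p = q then 1 else 0))

/-!
Each `Kᵢ` is `δ⁻¹ (P - 1)` for a block cyclic shift `P` (identity blocks on the superdiagonal)
whose wrap-around block is a twist `c`. For the scalar shift `P₁` of `K₁` one has
`S(a) = e^{-2πι t₁} P₁^{n₁-a}` and `P₁^{n₁} = e^{2πι t₁}`, so `K₁`, the twist `c₂` of `K₂` and the
upper block `X` of `J₃` all lie in the commutative algebra `ℂ[P₁]`, and the compatibility relation
is exactly `c₂ X = J₁`. This identity turns `J₃` into `e^{2πι ρ₃ t₂} Q^{n₂-m₃} (I ⊗ X)`, `Q` the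
block shift of `K₂`, which commutes with `Q` and with `I ⊗ K₁`. Finally `I ⊗ d` commutes with a
twisted block shift as soon as `d` commutes with its twist, which settles the commutation with `K₃`.
-/

theorem Matrix.commute_scalar_of_forall_commute {n α : Type*} [Fintype n] [DecidableEq n]
    [Semiring α] {r : α} {M : Matrix n n α} (h : ∀ i j, Commute r (M i j)) :
    Commute (scalar n r) M :=
  scalar_commute_iff.2 <| ext fun i j => (h i j).eq

theorem Algebra.commute_of_mem_adjoin_singleton {R A : Type*} [CommSemiring R] [Semiring A]
    [Algebra R A] {x a b : A} (ha : a ∈ Algebra.adjoin R {x}) (hb : b ∈ Algebra.adjoin R {x}) :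
    Commute a b :=
  commute_of_mem_adjoin_singleton_of_commute hb (commute_of_mem_adjoin_self ha).symm

section TwistedShift

variable {A : Type*} (N : ℕ)

def weightedShift [Zero A] (k : ℕ) (v : ℕ → A) : Matrix (Fin N) (Fin N) A :=
  of fun s s' => if (s' : ℕ) = (s + k) % N then v s else 0

variable {N}

theorem weightedShift_congr [Zero A] (k : ℕ) {v w : ℕ → A} (h : ∀ i < N, v i = w i) :
    weightedShift N k v = weightedShift N k w := by
  ext s s'
  simp only [weightedShift, of_apply, h s s.isLt]

theorem weightedShift_mul [Semiring A] (k l : ℕ) (v w : ℕ → A) :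
    weightedShift N k v * weightedShift N l w
      = weightedShift N (k + l) fun i => v i * w ((i + k) % N) := by
  ext s s'
  let r : Fin N := ⟨(s + k) % N, Nat.mod_lt _ s.pos⟩
  rw [mul_apply, Finset.sum_eq_single r]
  · simp only [weightedShift, of_apply, r, if_pos, Nat.mod_add_mod, add_assoc]
    split_ifs <;> simp
  · intro q _ hq
    simp only [weightedShift, of_apply]
    rw [if_neg fun h => hq (Fin.ext h), zero_mul]
  · simp

variable (N) [Semiring A]

def twistedShift (c : A) : Matrix (Fin N) (Fin N) A :=
  weightedShift N 1 fun i => if i + 1 < N then 1 else c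

variable {N}

theorem twistedShift_pow (c : A) {k : ℕ} (hk : k ≤ N) :
    twistedShift N c ^ k = weightedShift N k fun i => if i + k < N then 1 else c := by
  induction k with
  | zero =>
    ext s s'
    simp [weightedShift, one_apply, Nat.mod_eq_of_lt s.isLt, Fin.ext_iff, eq_comm]
  | succ k ih =>
    rw [pow_succ, ih (by omega), twistedShift, weightedShift_mul]
    refine weightedShift_congr _ fun i hi => ?_
    rcases lt_or_ge (i + k) N with h | h
    · rw [Nat.mod_eq_of_lt h]
      simp [h, add_assoc]
    · rw [Nat.mod_eq_sub_mod h, Nat.mod_eq_of_lt (by omega)]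
      simp [show ¬ i + k < N by omega, show i + k - N + 1 < N by omega,
        show ¬ i + (k + 1) < N by omega]

theorem twistedShift_pow_apply (c : A) {k : ℕ} (hk : k ≤ N) (s s' : Fin N) :
    (twistedShift N c ^ k) s s'
      = (if (s' : ℕ) = s + k then 1 else 0) + (if (s' : ℕ) + N = s + k then c else 0) := by
  rw [twistedShift_pow c hk]
  simp only [weightedShift, of_apply]
  rcases lt_or_ge (s + k) N with h | h
  · rw [Nat.mod_eq_of_lt h]
    split_ifs <;> first | omega | simp
  · rw [Nat.mod_eq_sub_mod h, Nat.mod_eq_of_lt (by omega)]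
    split_ifs <;> first | omega | simp

theorem twistedShift_apply (c : A) (s s' : Fin N) :
    twistedShift N c s s'
      = (if (s' : ℕ) = s + 1 then 1 else 0) + (if (s : ℕ) = N - 1 ∧ (s' : ℕ) = 0 then c else 0) := by
  rw [← pow_one (twistedShift N c), twistedShift_pow_apply c s.pos]
  have := s.isLt
  have := s'.isLt
  congr 1
  split_ifs <;> first | omega | rfl

theorem twistedShift_pow_card (c : A) : twistedShift N c ^ N = scalar (Fin N) c := by
  ext s s'
  rw [twistedShift_pow_apply c le_rfl, scalar_apply, diagonal_apply]
  have := s'.isLt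
  split_ifs <;> first | omega | simp_all [Fin.ext_iff]

theorem commute_scalar_twistedShift {c d : A} (h : Commute d c) :
    Commute (scalar (Fin N) d) (twistedShift N c) :=
  commute_scalar_of_forall_commute fun s s' => by
    rw [twistedShift_apply]
    exact Commute.add_right (by split_ifs <;> simp) (by split_ifs <;> simp [h])

end TwistedShift

section TwistedDiff

variable {𝕜 A : Type*} [Field 𝕜] [Ring A] [Algebra 𝕜 A] (N : ℕ)

def twistedDiff (δ : 𝕜) (c : A) : Matrix (Fin N) (Fin N) A :=
  (1 / δ) • (twistedShift N c - 1)

variable {N}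

theorem commute_scalar_twistedDiff (δ : 𝕜) {c d : A} (h : Commute d c) :
    Commute (scalar (Fin N) d) (twistedDiff N δ c) :=
  ((commute_scalar_twistedShift h).sub_right (Commute.one_right _)).smul_right _

theorem commute_scalar_twistedShift_pow_mul_scalar {c d x : A} (hdc : Commute d c)
    (hdx : Commute d x) (k : ℕ) :
    Commute (scalar (Fin N) d) (twistedShift N c ^ k * scalar (Fin N) x) :=
  ((commute_scalar_twistedShift hdc).pow_right k).mul_right (hdx.map (scalar (Fin N)))

theorem commute_twistedDiff_twistedShift_pow_mul_scalar (δ : 𝕜) {c x : A} (hcx : Commute c x)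
    (k : ℕ) : Commute (twistedDiff N δ c) (twistedShift N c ^ k * scalar (Fin N) x) :=
  (((Commute.self_pow _ k).mul_right (commute_scalar_twistedShift hcx.symm).symm).sub_left
    (Commute.one_left _)).smul_left _

end TwistedDiff

section Flatten

variable {N : ℕ} {ι R : Type*} [Fintype ι] [DecidableEq ι]

theorem comp_scalar [Semiring R] (M : Matrix ι ι R) :
    comp (Fin N) (Fin N) ι ι R (scalar (Fin N) M)
      = of fun p q => if p.1 = q.1 then M p.2 q.2 else 0 := by
  ext p q
  simp only [comp_apply, scalar_apply, diagonal_apply, of_apply]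
  split_ifs <;> rfl

theorem comp_twistedShift_pow_mul_scalar [Semiring R] (c X : Matrix ι ι R) (m : ℕ) :
    comp (Fin N) (Fin N) ι ι R (twistedShift N c ^ (N - m) * scalar (Fin N) X)
      = of fun p q =>
        (if (p.1 : ℕ) < m ∧ (q.1 : ℕ) = p.1 + (N - m) then X p.2 q.2 else 0)
          + (if m ≤ (p.1 : ℕ) ∧ (q.1 : ℕ) + m = p.1 then (c * X) p.2 q.2 else 0) := by
  ext p q
  simp only [comp_apply, of_apply, scalar_apply, mul_diagonal,
    twistedShift_pow_apply c (Nat.sub_le N m), add_mul, ite_mul, one_mul, zero_mul, Matrix.add_apply]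
  have := p.1.isLt
  have := q.1.isLt
  congr 1 <;> split_ifs <;> first | omega | rfl

theorem comp_twistedDiff {𝕜 : Type*} [Field 𝕜] [Ring R] [Algebra 𝕜 R] (δ : 𝕜)
    (c : Matrix ι ι R) :
    compAlgEquiv (Fin N) ι R 𝕜 (twistedDiff N δ c)
      = of fun p q => (1 / δ) •
        ((if (q.1 : ℕ) = p.1 + 1 ∧ q.2 = p.2 then 1 else 0)
          + (if (p.1 : ℕ) = N - 1 ∧ (q.1 : ℕ) = 0 then c p.2 q.2 else 0)
          - (if p = q then 1 else 0)) := by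
  ext p q
  rw [twistedDiff, map_smul, map_sub, map_one]
  simp only [Matrix.smul_apply, Matrix.sub_apply, of_apply, compAlgEquiv_apply, comp_apply,
    twistedShift_apply, Matrix.add_apply, apply_ite (fun M : Matrix ι ι R => M p.2 q.2),
    one_apply, Matrix.zero_apply, Prod.ext_iff, ite_and, @eq_comm _ q.2 p.2]

end Flatten

section YeeBlocks

variable (n₁ : ℕ) (t₁ : ℝ)

theorem K1_eq (δx : ℝ) :
    K1 n₁ δx t₁ = twistedDiff n₁ (δx : ℂ) (Complex.exp (2 * π * Complex.I * t₁)) := by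
  ext s s'
  simp only [K1, twistedDiff, of_apply, Matrix.smul_apply, Matrix.sub_apply, twistedShift_apply,
    one_apply, smul_eq_mul]

theorem Sblk_eq (a : ℕ) :
    Sblk n₁ t₁ a = Complex.exp (-(2 * π * Complex.I * t₁)) •
      twistedShift n₁ (Complex.exp (2 * π * Complex.I * t₁)) ^ (n₁ - a) := by
  ext s s'
  rw [Matrix.smul_apply, twistedShift_pow_apply _ (Nat.sub_le n₁ a)]
  simp only [Sblk, of_apply, smul_eq_mul]
  have := s.isLt
  have := s'.isLt
  split_ifs <;> first | omega | simp [← Complex.exp_add]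

noncomputable def J3corner (t₂ : ℝ) (ρ₁ ρ₂ ρ₄ ψ₁ m₁ m₂ : ℕ) : Matrix (Fin n₁) (Fin n₁) ℂ :=
  if m₁ ≤ m₂ then
    Complex.exp (-(2 * π * Complex.I * (t₂ + ρ₁ * ρ₄ * t₁ - ψ₁ * t₁))) • Sblk n₁ t₁ (m₂ - m₁)
  else
    Complex.exp (-(2 * π * Complex.I * (t₂ - ρ₂ * ρ₄ * t₁ - ψ₁ * t₁))) • Sblk n₁ t₁ (n₁ - m₁ + m₂)

local notation "𝒜" => Algebra.adjoin ℂ {twistedShift n₁ (Complex.exp (2 * π * Complex.I * t₁))}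

theorem K1_mem_adjoin (δx : ℝ) : K1 n₁ δx t₁ ∈ 𝒜 := by
  rw [K1_eq, twistedDiff]
  exact Subalgebra.smul_mem _
    (Subalgebra.sub_mem _ (Algebra.self_mem_adjoin_singleton ℂ _) (Subalgebra.one_mem _)) _

theorem Sblk_mem_adjoin (a : ℕ) : Sblk n₁ t₁ a ∈ 𝒜 := by
  rw [Sblk_eq]
  exact Subalgebra.smul_mem _ (Subalgebra.pow_mem _ (Algebra.self_mem_adjoin_singleton ℂ _) _) _

theorem J2_mem_adjoin (ρ₁ m₁ : ℕ) : J2 n₁ t₁ ρ₁ m₁ ∈ 𝒜 :=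
  Subalgebra.smul_mem _ (Sblk_mem_adjoin n₁ t₁ m₁) _

theorem J3corner_mem_adjoin (t₂ : ℝ) (ρ₁ ρ₂ ρ₄ ψ₁ m₁ m₂ : ℕ) :
    J3corner n₁ t₁ t₂ ρ₁ ρ₂ ρ₄ ψ₁ m₁ m₂ ∈ 𝒜 := by
  unfold J3corner
  split_ifs <;> exact Subalgebra.smul_mem _ (Sblk_mem_adjoin n₁ t₁ _) _

theorem exp_smul_J2_mul_J3corner (t₂ : ℝ) (ρ₁ ρ₂ ρ₄ ψ₁ m₁ m₂ : ℕ) (hm₁ : m₁ ≤ n₁)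
    (hm₂ : m₂ ≤ n₁) (hcompat₁ : m₁ ≤ m₂ → (ρ₂ : ℤ) = ρ₁ - ρ₁ * ρ₄ + ψ₁)
    (hcompat₂ : m₂ < m₁ → (ρ₂ : ℤ) = ρ₁ - 1 + ρ₂ * ρ₄ + ψ₁) :
    (Complex.exp (2 * π * Complex.I * t₂) • J2 n₁ t₁ ρ₁ m₁)
        * J3corner n₁ t₁ t₂ ρ₁ ρ₂ ρ₄ ψ₁ m₁ m₂ = J1 n₁ t₁ ρ₂ m₂ := by
  set P := twistedShift n₁ (Complex.exp (2 * π * Complex.I * t₁))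
  have hP : P ^ n₁ = Complex.exp (2 * π * Complex.I * t₁) • 1 := by
    rw [twistedShift_pow_card, scalar_apply, smul_one_eq_diagonal]
  simp only [J2, J1, J3corner, Sblk_eq]
  split_ifs with h
  · have hρ : (ρ₂ : ℂ) = ρ₁ - ρ₁ * ρ₄ + ψ₁ := by exact_mod_cast hcompat₁ h
    simp only [smul_mul_smul_comm, ← pow_add, smul_smul]
    rw [show n₁ - m₁ + (n₁ - (m₂ - m₁)) = n₁ + (n₁ - m₂) by omega, pow_add, hP,
      smul_mul_assoc, one_mul, smul_smul]
    congr 1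
    simp only [← Complex.exp_add]
    congr 1
    linear_combination -(2 * π * Complex.I * t₁) * hρ
  · have hρ : (ρ₂ : ℂ) = ρ₁ - 1 + ρ₂ * ρ₄ + ψ₁ := by exact_mod_cast hcompat₂ (by omega)
    simp only [smul_mul_smul_comm, ← pow_add, smul_smul]
    rw [show n₁ - m₁ + (n₁ - (n₁ - m₁ + m₂)) = n₁ - m₂ by omega]
    congr 1
    simp only [← Complex.exp_add]
    congr 1
    linear_combination -(2 * π * Complex.I * t₁) * hρ

end YeeBlocks

section YeeFlattened

variable {n₁ n₂ : ℕ}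

theorem K2_eq (δy t₁ t₂ : ℝ) (ρ₁ m₁ : ℕ) :
    K2 n₁ n₂ δy t₁ t₂ ρ₁ m₁ = compAlgEquiv (Fin n₂) (Fin n₁) ℂ ℂ
      (twistedDiff n₂ (δy : ℂ) (Complex.exp (2 * π * Complex.I * t₂) • J2 n₁ t₁ ρ₁ m₁)) := by
  rw [comp_twistedDiff]
  rfl

theorem K3_eq {n₃ : ℕ} (δz t₃ : ℝ) (J : Matrix (Fin n₂ × Fin n₁) (Fin n₂ × Fin n₁) ℂ) :
    K3 n₁ n₂ n₃ δz t₃ J = compAlgEquiv (Fin n₃) (Fin n₂ × Fin n₁) ℂ ℂ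
      (twistedDiff n₃ (δz : ℂ) (Complex.exp (2 * π * Complex.I * t₃) • J)) := by
  rw [comp_twistedDiff]
  rfl

theorem J3acute_eq (t₁ t₂ : ℝ) (ρ₁ ρ₂ ρ₃ ρ₄ ψ₁ m₁ m₂ m₃ : ℕ) (c : Matrix (Fin n₁) (Fin n₁) ℂ)
    (hc : c * J3corner n₁ t₁ t₂ ρ₁ ρ₂ ρ₄ ψ₁ m₁ m₂ = J1 n₁ t₁ ρ₂ m₂) :
    J3acute n₁ n₂ t₁ t₂ ρ₁ ρ₂ ρ₃ ρ₄ ψ₁ m₁ m₂ m₃ = compAlgEquiv (Fin n₂) (Fin n₁) ℂ ℂ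
      (Complex.exp (2 * π * Complex.I * ρ₃ * t₂) • (twistedShift n₂ c ^ (n₂ - m₃)
        * scalar (Fin n₂) (J3corner n₁ t₁ t₂ ρ₁ ρ₂ ρ₄ ψ₁ m₁ m₂))) := by
  rw [map_smul, compAlgEquiv_apply, comp_twistedShift_pow_mul_scalar, hc]
  ext p q
  simp only [J3acute, J3corner, of_apply, Matrix.smul_apply, smul_eq_mul,
    apply_ite (fun M : Matrix (Fin n₁) (Fin n₁) ℂ => M p.2 q.2)]

end YeeFlattened

theorem stmt_10_general (n₁ n₂ n₃ : ℕ) (δx δy δz : ℝ) (t₁ t₂ t₃ : ℝ) (ρ₁ ρ₂ ρ₃ ρ₄ ψ₁ : ℕ)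
    (m₁ m₂ m₃ : ℕ) (hm₁ : m₁ ≤ n₁) (hm₂ : m₂ ≤ n₁)
    (hcompat₁ : m₁ ≤ m₂ → (ρ₂ : ℤ) = (ρ₁ : ℤ) - (ρ₁ : ℤ) * ρ₄ + ψ₁)
    (hcompat₂ : m₂ < m₁ → (ρ₂ : ℤ) = (ρ₁ : ℤ) - 1 + (ρ₂ : ℤ) * ρ₄ + ψ₁)
    (C₁ C₂ C₃ : Matrix (Fin n₃ × Fin n₂ × Fin n₁) (Fin n₃ × Fin n₂ × Fin n₁) ℂ)
    (hC₁ : C₁ = Matrix.of fun p q =>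
      if p.1 = q.1 ∧ p.2.1 = q.2.1 then K1 n₁ δx t₁ p.2.2 q.2.2 else 0)
    (hC₂ : C₂ = Matrix.of fun p q =>
      if p.1 = q.1 then K2 n₁ n₂ δy t₁ t₂ ρ₁ m₁ p.2 q.2 else 0)
    (hC₃ : C₃ = K3 n₁ n₂ n₃ δz t₃ (J3acute n₁ n₂ t₁ t₂ ρ₁ ρ₂ ρ₃ ρ₄ ψ₁ m₁ m₂ m₃)) :
    C₁ * C₂ = C₂ * C₁ ∧ C₁ * C₃ = C₃ * C₁ ∧ C₂ * C₃ = C₃ * C₂ := by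
  set c := Complex.exp (2 * π * Complex.I * t₂) • J2 n₁ t₁ ρ₁ m₁
  set X := J3corner n₁ t₁ t₂ ρ₁ ρ₂ ρ₄ ψ₁ m₁ m₂
  have hc : c ∈ _ := Subalgebra.smul_mem _ (J2_mem_adjoin n₁ t₁ ρ₁ m₁) _
  have hK1c := Algebra.commute_of_mem_adjoin_singleton (K1_mem_adjoin n₁ t₁ δx) hc
  have hK1X := Algebra.commute_of_mem_adjoin_singleton (K1_mem_adjoin n₁ t₁ δx)
    (J3corner_mem_adjoin n₁ t₁ t₂ ρ₁ ρ₂ ρ₄ ψ₁ m₁ m₂)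
  have hcX := Algebra.commute_of_mem_adjoin_singleton hc
    (J3corner_mem_adjoin n₁ t₁ t₂ ρ₁ ρ₂ ρ₄ ψ₁ m₁ m₂)
  set D := scalar (Fin n₂) (K1 n₁ δx t₁)
  set B := twistedDiff n₂ (δy : ℂ) c
  set J := twistedShift n₂ c ^ (n₂ - m₃) * scalar (Fin n₂) X
  have hDB : Commute D B := commute_scalar_twistedDiff _ hK1c
  have hDJ : Commute D J := commute_scalar_twistedShift_pow_mul_scalar hK1c hK1X _
  have hBJ : Commute B J := commute_twistedDiff_twistedShift_pow_mul_scalar _ hcX _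
  have hC₁' : C₁ = compAlgEquiv (Fin n₃) (Fin n₂ × Fin n₁) ℂ ℂ
      (scalar (Fin n₃) (compAlgEquiv (Fin n₂) (Fin n₁) ℂ ℂ D)) := by
    simp only [hC₁, D, compAlgEquiv_apply, comp_scalar, of_apply, ite_and]
  have hC₂' : C₂ = compAlgEquiv (Fin n₃) (Fin n₂ × Fin n₁) ℂ ℂ
      (scalar (Fin n₃) (compAlgEquiv (Fin n₂) (Fin n₁) ℂ ℂ B)) := by
    rw [hC₂, ← K2_eq, compAlgEquiv_apply, comp_scalar]
  rw [J3acute_eq t₁ t₂ ρ₁ ρ₂ ρ₃ ρ₄ ψ₁ m₁ m₂ m₃ c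
    (exp_smul_J2_mul_J3corner n₁ t₁ t₂ ρ₁ ρ₂ ρ₄ ψ₁ m₁ m₂ hm₁ hm₂ hcompat₁ hcompat₂), K3_eq] at hC₃
  subst hC₁' hC₂' hC₃
  exact ⟨(((hDB.map _).map _).map _).eq,
    ((commute_scalar_twistedDiff _ (((hDJ.smul_right _).map _).smul_right _)).map _).eq,
    ((commute_scalar_twistedDiff _ (((hBJ.smul_right _).map _).smul_right _)).map _).eq⟩

/-- Section 4.2: `C₁ = I_{n₃} ⊗ I_{n₂} ⊗ K₁`, `C₂ = I_{n₃} ⊗ K₂`, `C₃ = K₃`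
(the case `cos θα − cos θβ cos θγ ≥ 0`) pairwise commute. -/
theorem stmt_10 (n₁ n₂ n₃ : ℕ) (hn₁ : 1 ≤ n₁) (hn₂ : 1 ≤ n₂) (hn₃ : 1 ≤ n₃)
    (δx δy δz : ℝ) (hδx : 0 < δx) (hδy : 0 < δy) (hδz : 0 < δz) (t₁ t₂ t₃ : ℝ)
    (ρ₁ ρ₂ ρ₃ ρ₄ ψ₁ : ℕ) (hρ₁ : ρ₁ ≤ 1) (hρ₂ : ρ₂ ≤ 1) (hρ₃ : ρ₃ ≤ 1)
    (hρ₄ : ρ₄ ≤ 1) (hψ₁ : ψ₁ ≤ 1)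
    (m₁ m₂ m₃ : ℕ) (hm₁ : m₁ ≤ n₁) (hm₂ : m₂ ≤ n₁) (hm₃ : m₃ ≤ n₂)
    (hcompat₁ : m₁ ≤ m₂ → (ρ₂ : ℤ) = (ρ₁ : ℤ) - (ρ₁ : ℤ) * ρ₄ + ψ₁)
    (hcompat₂ : m₂ < m₁ → (ρ₂ : ℤ) = (ρ₁ : ℤ) - 1 + (ρ₂ : ℤ) * ρ₄ + ψ₁)
    (C₁ C₂ C₃ : Matrix (Fin n₃ × Fin n₂ × Fin n₁) (Fin n₃ × Fin n₂ × Fin n₁) ℂ)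
    (hC₁ : C₁ = Matrix.of fun p q =>
      if p.1 = q.1 ∧ p.2.1 = q.2.1 then K1 n₁ δx t₁ p.2.2 q.2.2 else 0)
    (hC₂ : C₂ = Matrix.of fun p q =>
      if p.1 = q.1 then K2 n₁ n₂ δy t₁ t₂ ρ₁ m₁ p.2 q.2 else 0)
    (hC₃ : C₃ = K3 n₁ n₂ n₃ δz t₃ (J3acute n₁ n₂ t₁ t₂ ρ₁ ρ₂ ρ₃ ρ₄ ψ₁ m₁ m₂ m₃)) :
    C₁ * C₂ = C₂ * C₁ ∧ C₁ * C₃ = C₃ * C₁ ∧ C₂ * C₃ = C₃ * C₂ :=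
  stmt_10_general n₁ n₂ n₃ δx δy δz t₁ t₂ t₃ ρ₁ ρ₂ ρ₃ ρ₄ ψ₁ m₁ m₂ m₃ hm₁ hm₂ hcompat₁ hcompat₂ C₁ C₂
    C₃ hC₁ hC₂ hC₃
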